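/- arXiv:2206.10569 — 3 statements merged into one kernel-verified Lean document; each statement's English description precedes it below -/
import Mathlib

section
/- Let A be a symmetric real n×n matrix with ρ(A) < 1, and let e_i be the i-th standard basis vector. Then tr(Σ_{τ=0}^∞ A^τ e_i e_iᵀ A^τ) = [(I − A²)⁻¹]_{ii}, i.e., the average controllability of node i equals the i-th diagonal entry of (I − A²)⁻¹. -/
open Matrix

noncomputable def specRad {n : ℕ} (Z : Matrix (Fin n) (Fin n) ℝ) : ℝ :=
  sSup ((fun z : ℂ => ‖z‖) '' spectrum ℂ (Z.map ((↑) : ℝ → ℂ)))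

open Filter Topology in
/-- If the powers of `x` are summable and tend to zero, then the geometric series sums to
`Ring.inverse (1 - x)`, and `1 - x` is a unit. -/
private lemma aux_geom_hasSum {R : Type*} [NormedRing R] {x : R}
    (hsum : Summable (fun n : ℕ => x ^ n))
    (h0 : Tendsto (fun n : ℕ => x ^ n) atTop (𝓝 0)) :
    HasSum (fun n : ℕ => x ^ n) (Ring.inverse (1 - x)) ∧ IsUnit (1 - x) := by
  have hmul : (∑' i : ℕ, x ^ i) * (1 - x) = 1 := by
    have h1 := hsum.hasSum.mul_right (1 - x)
    refine tendsto_nhds_unique h1.tendsto_sum_nat ?_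
    have h2 : Tendsto (fun n : ℕ => 1 - x ^ n) atTop (𝓝 1) := by
      simpa using tendsto_const_nhds.sub h0
    convert ← h2
    rw [← geom_sum_mul_neg, Finset.sum_mul]
  have hmul' : (1 - x) * ∑' i : ℕ, x ^ i = 1 := by
    have h1 := hsum.hasSum.mul_left (1 - x)
    refine tendsto_nhds_unique h1.tendsto_sum_nat ?_
    have h2 : Tendsto (fun n : ℕ => 1 - x ^ n) atTop (𝓝 1) := by
      simpa using tendsto_const_nhds.sub h0
    convert ← h2
    rw [← mul_neg_geom_sum, Finset.mul_sum]
  let u : Rˣ := ⟨1 - x, ∑' i : ℕ, x ^ i, hmul', hmul⟩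
  have hinv : Ring.inverse (1 - x) = ∑' i : ℕ, x ^ i := by
    have : Ring.inverse (u : R) = ↑u⁻¹ := Ring.inverse_unit u
    exact this
  exact ⟨hinv ▸ hsum.hasSum, ⟨u, rfl⟩⟩

attribute [local instance] Matrix.linftyOpNormedAddCommGroup Matrix.linftyOpNormedRing
  Matrix.linftyOpNormedAlgebra

open Filter Topology in
theorem avg_controllability_node_eq_diag {n : ℕ} (A : Matrix (Fin n) (Fin n) ℝ)
    (hA : A.IsSymm) (hρ : specRad A < 1) (i : Fin n) :
    HasSum (fun τ : ℕ => (A ^ τ * Matrix.single i i (1 : ℝ) * A ^ τ).trace)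
      ((((1 - A ^ 2)⁻¹ : Matrix (Fin n) (Fin n) ℝ)) i i) := by
  -- Step 1: the trace equals the (i,i) entry of (A^2)^τ.
  have htr : ∀ τ : ℕ, (A ^ τ * Matrix.single i i (1 : ℝ) * A ^ τ).trace
      = ((A ^ 2) ^ τ) i i := by
    intro τ
    have h1 : (A ^ τ * Matrix.single i i (1 : ℝ) * A ^ τ).trace
        = ((A ^ τ * A ^ τ) * Matrix.single i i (1 : ℝ)).trace := by
      rw [Matrix.trace_mul_comm, ← mul_assoc]
    have h2 : ((A ^ τ * A ^ τ) * Matrix.single i i (1 : ℝ)).trace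
        = (A ^ τ * A ^ τ) i i := by
      rw [Matrix.trace]
      rw [Finset.sum_eq_single i]
      · simp [Matrix.diag]
      · intro j _ hj
        simp [Matrix.diag, Matrix.mul_single_apply_of_ne (hbj := hj)]
      · simp
    have h3 : A ^ τ * A ^ τ = (A ^ 2) ^ τ := by
      rw [← pow_add, ← pow_mul, two_mul]
    rw [h1, h2, h3]
  haveI : Nonempty (Fin n) := ⟨i⟩
  -- complexification
  set f : ℝ →+* ℂ := Complex.ofRealHom with hf
  set b : Matrix (Fin n) (Fin n) ℂ := A.map ((↑) : ℝ → ℂ) with hb_def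
  have hbmap : b = f.mapMatrix A := rfl
  haveI : Nontrivial (Matrix (Fin n) (Fin n) ℂ) := by
    refine nontrivial_of_ne 0 1 fun h => ?_
    have := congrFun (congrFun h i) i
    simp [Matrix.one_apply] at this
  -- the spectral radius of b is < 1
  have hspec : spectralRadius ℂ b < 1 := by
    have hbdd : BddAbove ((fun z : ℂ => ‖z‖) '' spectrum ℂ b) :=
      ((spectrum.isCompact b).image continuous_norm).bddAbove
    have hle : ∀ k ∈ spectrum ℂ b, (‖k‖₊ : ENNReal) ≤ ENNReal.ofReal (specRad A) := by
      intro k hk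
      have h1 : ‖k‖ ≤ specRad A := le_csSup hbdd ⟨k, hk, rfl⟩
      have h2 : (‖k‖₊ : ℝ) = ‖k‖ := rfl
      rw [← ENNReal.ofReal_coe_nnreal]
      exact ENNReal.ofReal_le_ofReal (by rw [h2]; exact h1)
    calc spectralRadius ℂ b ≤ ENNReal.ofReal (specRad A) := iSup₂_le hle
      _ < 1 := ENNReal.ofReal_lt_one.mpr hρ
  -- hence the spectral radius of c := b ^ 2 is < 1
  set c : Matrix (Fin n) (Fin n) ℂ := b ^ 2 with hc_def
  have hspec2 : spectralRadius ℂ c < 1 := by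
    have hle : ∀ k ∈ spectrum ℂ c, (‖k‖₊ : ENNReal) ≤ spectralRadius ℂ b * spectralRadius ℂ b := by
      intro k hk
      rw [hc_def] at hk
      have himg : spectrum ℂ (b ^ 2) = (fun x : ℂ => x ^ 2) '' spectrum ℂ b :=
        spectrum.map_pow_of_pos (𝕜 := ℂ) b (by norm_num)
      obtain ⟨z, hz, rfl⟩ := himg.subset hk
      have h1 : (‖z‖₊ : ENNReal) ≤ spectralRadius ℂ b := le_iSup₂ (f := fun k _ => (‖k‖₊ : ENNReal)) z hz
      calc (‖z ^ 2‖₊ : ENNReal) = (‖z‖₊ : ENNReal) * ‖z‖₊ := by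
            rw [sq, nnnorm_mul]; push_cast; ring
        _ ≤ spectralRadius ℂ b * spectralRadius ℂ b := mul_le_mul' h1 h1
    calc spectralRadius ℂ c ≤ spectralRadius ℂ b * spectralRadius ℂ b := iSup₂_le hle
      _ ≤ spectralRadius ℂ b * 1 := mul_le_mul_right hspec.le _
      _ = spectralRadius ℂ b := mul_one _
      _ < 1 := hspec
  -- Gelfand: powers of c are eventually geometrically small
  obtain ⟨r, hrρ, hr1⟩ := ENNReal.lt_iff_exists_nnreal_btwn.mp hspec2
  have hr1' : (r : ℝ) < 1 := by exact_mod_cast hr1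
  have hr0 : (0 : ℝ) ≤ r := r.coe_nonneg
  have hgel := spectrum.pow_nnnorm_pow_one_div_tendsto_nhds_spectralRadius c
  have hev : ∀ᶠ τ : ℕ in atTop, (‖c ^ τ‖₊ : ENNReal) ^ (1 / (τ : ℝ)) < (r : ENNReal) :=
    hgel.eventually (tendsto_id.eventually_lt_const hrρ) |>.mono (fun τ h => h) |>.mono
      (fun τ h => h)
  have hbound : ∀ᶠ τ : ℕ in atTop, ‖c ^ τ‖ ≤ (r : ℝ) ^ τ := by
    filter_upwards [hev, eventually_ge_atTop 1] with τ hτ hτ1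
    have hτ0 : (τ : ℝ) ≠ 0 := Nat.cast_ne_zero.mpr (by omega)
    have h1 : ((‖c ^ τ‖₊ : ENNReal) ^ (1 / (τ : ℝ))) ^ (τ : ℝ) ≤ (r : ENNReal) ^ (τ : ℝ) :=
      ENNReal.rpow_le_rpow hτ.le (by positivity)
    rw [← ENNReal.rpow_mul, one_div, inv_mul_cancel₀ hτ0, ENNReal.rpow_one,
      ENNReal.rpow_natCast, ← ENNReal.coe_pow, ENNReal.coe_le_coe] at h1
    exact_mod_cast h1
  have hsummable : Summable (fun τ : ℕ => c ^ τ) := by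
    apply Summable.of_norm_bounded_eventually_nat
      (summable_geometric_of_lt_one hr0 hr1')
    exact hbound
  have h0 : Tendsto (fun τ : ℕ => c ^ τ) atTop (𝓝 0) := by
    apply squeeze_zero_norm' hbound
    exact tendsto_pow_atTop_nhds_zero_of_lt_one hr0 hr1'
  obtain ⟨hgeo, hunit⟩ := aux_geom_hasSum hsummable h0
  -- relate complex inverse to real inverse
  have hmapsub : (1 - c) = f.mapMatrix (1 - A ^ 2) := by
    rw [hc_def, hbmap, _root_.map_sub, _root_.map_one, _root_.map_pow]
  have hdetR : IsUnit (1 - A ^ 2).det := by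
    have h1 : IsUnit (1 - c).det := (Matrix.isUnit_iff_isUnit_det _).mp hunit
    rw [hmapsub, ← RingHom.map_det] at h1
    have h2 : ((1 - A ^ 2).det : ℂ) ≠ 0 := h1.ne_zero
    have h3 : (1 - A ^ 2).det ≠ 0 := fun h => h2 (by rw [h]; simp)
    exact isUnit_iff_ne_zero.mpr h3
  set Minv : Matrix (Fin n) (Fin n) ℝ := (1 - A ^ 2)⁻¹ with hMinv
  have hinvmap : (1 - c)⁻¹ = f.mapMatrix Minv := by
    apply Matrix.inv_eq_right_inv
    rw [hmapsub, hMinv, ← _root_.map_mul, Matrix.mul_nonsing_inv _ hdetR, _root_.map_one]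
  have hringinv : Ring.inverse (1 - c) = f.mapMatrix Minv := by
    rw [← Matrix.nonsing_inv_eq_ringInverse, hinvmap]
  rw [hringinv] at hgeo
  -- apply the continuous linear entry-evaluation map
  let φ : Matrix (Fin n) (Fin n) ℂ →ₗ[ℂ] ℂ :=
    { toFun := fun M => M i i, map_add' := fun _ _ => rfl, map_smul' := fun _ _ => rfl }
  have φcont : Continuous φ := φ.continuous_of_finiteDimensional
  have hentry : HasSum (fun τ : ℕ => (c ^ τ) i i) ((f.mapMatrix Minv) i i) :=
    hgeo.map φ.toAddMonoidHom φcont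
  -- rewrite entries as real coercions
  have hpowmap : ∀ τ : ℕ, (c ^ τ) i i = (((A ^ 2) ^ τ) i i : ℝ) := by
    intro τ
    rw [hc_def, hbmap, ← _root_.map_pow, ← _root_.map_pow]
    rfl
  have hentry' : HasSum (fun τ : ℕ => ((((A ^ 2) ^ τ) i i : ℝ) : ℂ))
      (((Minv i i : ℝ)) : ℂ) := by
    have he : (fun τ : ℕ => ((((A ^ 2) ^ τ) i i : ℝ) : ℂ)) = fun τ => (c ^ τ) i i := by
      funext τ; exact (hpowmap τ).symm
    rw [he]
    exact hentry
  -- take real parts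
  have hre : HasSum (fun τ : ℕ => ((A ^ 2) ^ τ) i i) (Minv i i) := by
    have h := hentry'.map Complex.reCLM Complex.reCLM.continuous
    simpa [Function.comp_def] using h
  rw [hMinv] at hre
  simpa only [htr] using hre
end

section
/- Let A be a symmetric real n×n matrix with ρ(A) < 1, and let c ∈ ℝⁿ with B = Diag(c) (diagonal matrix with diagonal c). Then tr(𝒞(A, B)) = Σ_{v=1}^n c_v² · [(I − A²)⁻¹]_{vv}, i.e., the average controllability with input matrix Diag(c) is the weighted sum (c ⊙ c)ᵀ diag((I − A²)⁻¹). -/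
open Matrix

lemma specRad_mem_le {n : ℕ} (Z : Matrix (Fin n) (Fin n) ℝ) {x : ℝ}
    (hx : x ∈ spectrum ℝ Z) : |x| ≤ specRad Z := by
  have hmem : (x : ℂ) ∈ spectrum ℂ (Z.map ((↑) : ℝ → ℂ)) := by
    rw [spectrum.mem_iff] at hx ⊢
    intro hu
    apply hx
    rw [Matrix.isUnit_iff_isUnit_det] at hu ⊢
    have hmap : ((algebraMap ℝ (Matrix (Fin n) (Fin n) ℝ) x - Z).map ((↑) : ℝ → ℂ))
        = algebraMap ℂ (Matrix (Fin n) (Fin n) ℂ) (x : ℂ) - Z.map ((↑) : ℝ → ℂ) := by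
      ext i j
      simp only [Matrix.map_apply, Matrix.sub_apply, Matrix.algebraMap_matrix_apply]
      split <;> simp
    have hdet2 : (((algebraMap ℝ (Matrix (Fin n) (Fin n) ℝ) x - Z)).map ((↑) : ℝ → ℂ)).det
        = (((algebraMap ℝ (Matrix (Fin n) (Fin n) ℝ) x - Z)).det : ℂ) :=
      (Complex.ofRealHom.map_det _).symm
    rw [← hmap, hdet2] at hu
    exact isUnit_iff_ne_zero.mpr (by exact_mod_cast isUnit_iff_ne_zero.mp hu)
  have hfin : ((fun z : ℂ => ‖z‖) '' spectrum ℂ (Z.map ((↑) : ℝ → ℂ))).Finite :=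
    (Matrix.finite_spectrum _).image _
  apply le_csSup hfin.bddAbove
  exact ⟨(x : ℂ), hmem, by simp⟩

theorem avg_controllability_diagonal_input {n : ℕ} (A : Matrix (Fin n) (Fin n) ℝ)
    (hA : A.IsSymm) (hρ : specRad A < 1) (c : Fin n → ℝ) :
    HasSum
      (fun τ : ℕ =>
        (A ^ τ * (Matrix.diagonal c * (Matrix.diagonal c)ᵀ) * A ^ τ).trace)
      (∑ v, (c v) ^ 2 * ((((1 - A ^ 2)⁻¹ : Matrix (Fin n) (Fin n) ℝ)) v v)) := by
  classical
  have hH : A.IsHermitian := by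
    rwa [Matrix.IsHermitian, Matrix.conjTranspose_eq_transpose_of_trivial]
  set U : Matrix (Fin n) (Fin n) ℝ := (hH.eigenvectorUnitary : Matrix (Fin n) (Fin n) ℝ) with hUdef
  set μ : Fin n → ℝ := hH.eigenvalues with hμdef
  have hU1 : U * star U = 1 := (Matrix.mem_unitaryGroup_iff).mp hH.eigenvectorUnitary.2
  have hU2 : star U * U = 1 := (Matrix.mem_unitaryGroup_iff').mp hH.eigenvectorUnitary.2
  have hspec : A = U * Matrix.diagonal μ * star U := by
    have := hH.spectral_theorem
    rwa [RCLike.ofReal_real_eq_id, Function.id_comp] at this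
  have habs : ∀ i, |μ i| < 1 := fun i =>
    lt_of_le_of_lt (specRad_mem_le A (hH.eigenvalues_mem_spectrum_real i)) hρ
  have hsq : ∀ i, μ i ^ 2 < 1 := fun i => (sq_lt_one_iff_abs_lt_one (μ i)).mpr (habs i)
  -- powers of A
  have hpow : ∀ τ : ℕ, A ^ τ = U * Matrix.diagonal (fun i => μ i ^ τ) * star U := by
    intro τ
    induction τ with
    | zero =>
      simp only [pow_zero, Matrix.diagonal_one, mul_one, hU1]
    | succ τ ih =>
      rw [pow_succ, ih, hspec,
        show U * Matrix.diagonal (fun i => μ i ^ τ) * star U * (U * Matrix.diagonal μ * star U)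
          = U * (Matrix.diagonal (fun i => μ i ^ τ) * (star U * U) * Matrix.diagonal μ) * star U by
          simp only [Matrix.mul_assoc],
        hU2, mul_one, Matrix.diagonal_mul_diagonal,
        show (fun i => μ i ^ τ * μ i) = fun i => μ i ^ (τ + 1) from
          funext fun i => (pow_succ (μ i) τ).symm]
  -- diagonal entries of U * diagonal d * star U
  have hentry : ∀ (d : Fin n → ℝ) (v : Fin n),
      (U * Matrix.diagonal d * star U) v v = ∑ i, (U v i) ^ 2 * d i := by
    intro d v
    rw [Matrix.mul_apply]
    refine Finset.sum_congr rfl fun i _ => ?_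
    rw [Matrix.mul_diagonal, Matrix.star_eq_conjTranspose, Matrix.conjTranspose_apply]
    simp only [star_trivial]
    ring
  -- 1 - A²
  have hone : (1 : Matrix (Fin n) (Fin n) ℝ) - A ^ 2
      = U * Matrix.diagonal (fun i => 1 - μ i ^ 2) * star U := by
    rw [show Matrix.diagonal (fun i => 1 - μ i ^ 2)
        = 1 - Matrix.diagonal (fun i => μ i ^ 2) by
          rw [← Matrix.diagonal_one, Matrix.diagonal_sub],
      Matrix.mul_sub, Matrix.sub_mul, mul_one, hU1, ← hpow 2]
  have hinv : ((1 : Matrix (Fin n) (Fin n) ℝ) - A ^ 2)⁻¹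
      = U * Matrix.diagonal (fun i => (1 - μ i ^ 2)⁻¹) * star U := by
    apply Matrix.inv_eq_right_inv
    rw [hone,
      show U * Matrix.diagonal (fun i => 1 - μ i ^ 2) * star U
        * (U * Matrix.diagonal (fun i => (1 - μ i ^ 2)⁻¹) * star U)
        = U * (Matrix.diagonal (fun i => 1 - μ i ^ 2) * (star U * U)
          * Matrix.diagonal (fun i => (1 - μ i ^ 2)⁻¹)) * star U by
          simp only [Matrix.mul_assoc],
      hU2, mul_one, Matrix.diagonal_mul_diagonal,
      show (fun i => (1 - μ i ^ 2) * (1 - μ i ^ 2)⁻¹) = fun _ => (1 : ℝ) from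
        funext fun i => mul_inv_cancel₀ (by nlinarith [hsq i]),
      Matrix.diagonal_one, mul_one, hU1]
  -- simplify the summand
  have hterm : ∀ τ : ℕ,
      (A ^ τ * (Matrix.diagonal c * (Matrix.diagonal c)ᵀ) * A ^ τ).trace
      = ∑ v, (c v) ^ 2 * ∑ i, (U v i) ^ 2 * (μ i ^ 2) ^ τ := by
    intro τ
    rw [Matrix.diagonal_transpose, Matrix.diagonal_mul_diagonal, Matrix.trace_mul_cycle,
      show A ^ τ * A ^ τ = A ^ (2 * τ) by rw [two_mul, pow_add], Matrix.trace]
    refine Finset.sum_congr rfl fun v _ => ?_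
    rw [Matrix.diag_apply, Matrix.mul_diagonal, hpow (2 * τ), hentry,
      Finset.mul_sum, Finset.sum_mul]
    refine Finset.sum_congr rfl fun i _ => ?_
    rw [pow_mul]
    ring
  have hkey : HasSum
      (fun τ : ℕ => ∑ v, (c v) ^ 2 * ∑ i, (U v i) ^ 2 * (μ i ^ 2) ^ τ)
      (∑ v, (c v) ^ 2 * ∑ i, (U v i) ^ 2 * (1 - μ i ^ 2)⁻¹) := by
    apply hasSum_sum
    intro v _
    apply HasSum.mul_left
    apply hasSum_sum
    intro i _
    exact (hasSum_geometric_of_lt_one (sq_nonneg (μ i)) (hsq i)).mul_left _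
  have hfinal : (∑ v, (c v) ^ 2 * ∑ i, (U v i) ^ 2 * (1 - μ i ^ 2)⁻¹)
      = ∑ v, (c v) ^ 2 * ((((1 - A ^ 2)⁻¹ : Matrix (Fin n) (Fin n) ℝ)) v v) := by
    refine Finset.sum_congr rfl fun v _ => ?_
    rw [hinv, hentry]
  rw [← hfinal]
  have hfun : (fun τ : ℕ =>
      (A ^ τ * (Matrix.diagonal c * (Matrix.diagonal c)ᵀ) * A ^ τ).trace)
      = fun τ : ℕ => ∑ v, (c v) ^ 2 * ∑ i, (U v i) ^ 2 * (μ i ^ 2) ^ τ :=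
    funext hterm
  rw [hfun]
  exact hkey
end

section
/- Let Φ ∈ {0,1}^{K×n} be a community membership matrix, P ∈ ℝ^{K×K} symmetric, c > 0, and set Ā = Φᵀ P Φ and Ā_nom = Ā/(c + ρ(Ā)), where ρ(Ā) > 0. Let D = (1/n)ΦΦᵀ, γ = 1/(c/n + ρ(PD)), and Υ = D^{-1/2}([I − (γ D^{1/2} P D^{1/2})²]⁻¹ − I)D^{-1/2}, assuming D is invertible and ρ(γ D^{1/2} P D^{1/2}) < 1. Then diag((I − Ā_nom²)⁻¹) = 𝟏_n + (1/n) Φᵀ diag(Υ). -/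
open Matrix Pointwise

lemma mapC_eq {m : ℕ} (Z : Matrix (Fin m) (Fin m) ℝ) :
    Z.map ((↑) : ℝ → ℂ) = (Complex.ofRealHom).mapMatrix Z := rfl

lemma abs_mem_le_specRad {m : ℕ} (Z : Matrix (Fin m) (Fin m) ℝ) {μ : ℂ}
    (h : μ ∈ spectrum ℂ (Z.map ((↑) : ℝ → ℂ))) : ‖μ‖ ≤ specRad Z :=
  le_csSup (((Matrix.finite_spectrum _).image _).bddAbove) ⟨μ, h, rfl⟩

lemma isUnit_det_one_sub_sq {m : ℕ} (Z : Matrix (Fin m) (Fin m) ℝ)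
    (h : specRad Z < 1) : IsUnit (1 - Z ^ 2).det := by
  rw [isUnit_iff_ne_zero]
  intro hdet
  have hW : ¬ IsUnit ((1 : Matrix (Fin m) (Fin m) ℂ) - (Z.map ((↑) : ℝ → ℂ)) ^ 2) := by
    rw [Matrix.isUnit_iff_isUnit_det, isUnit_iff_ne_zero, ne_eq, not_not]
    have : (1 : Matrix (Fin m) (Fin m) ℂ) - (Z.map ((↑) : ℝ → ℂ)) ^ 2
        = Complex.ofRealHom.mapMatrix ((1 : Matrix (Fin m) (Fin m) ℝ) - Z ^ 2) := by
      rw [_root_.map_sub, _root_.map_one, _root_.map_pow, mapC_eq]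
    rw [this, ← RingHom.map_det, hdet, map_zero]
  have h1 : (1 : ℂ) ∈ spectrum ℂ ((Z.map ((↑) : ℝ → ℂ)) ^ 2) := by
    rw [spectrum.mem_iff, _root_.map_one]; exact hW
  rw [spectrum.map_pow_of_pos _ (by norm_num : 0 < 2)] at h1
  obtain ⟨μ, hμ, hμ2⟩ := h1
  have habs : ‖μ‖ ≤ specRad Z := abs_mem_le_specRad Z hμ
  have h0 : (0:ℝ) ≤ ‖μ‖ := norm_nonneg _
  have : ‖μ ^ 2‖ = 1 := by rw [show μ ^ 2 = 1 from hμ2]; simp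
  rw [norm_pow] at this
  nlinarith [h.le]

lemma specRad_smul {m : ℕ} (Z : Matrix (Fin m) (Fin m) ℝ) {r : ℝ} (hr : 0 < r) :
    specRad (r • Z) = r * specRad Z := by
  have hmap : (r • Z).map ((↑) : ℝ → ℂ) = (r : ℂ) • Z.map ((↑) : ℝ → ℂ) := by
    ext i j; simp [Matrix.map_apply]
  have hr' : (r : ℂ) ≠ 0 := by exact_mod_cast hr.ne'
  unfold specRad
  rw [hmap, show (r:ℂ) • Z.map ((↑) : ℝ → ℂ) = (Units.mk0 (r:ℂ) hr') • Z.map ((↑) : ℝ → ℂ) from rfl,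
    spectrum.unit_smul_eq_smul]
  have himg : (fun z : ℂ => ‖z‖) '' ((Units.mk0 (r:ℂ) hr') • spectrum ℂ (Z.map ((↑) : ℝ → ℂ)))
      = r • ((fun z : ℂ => ‖z‖) '' spectrum ℂ (Z.map ((↑) : ℝ → ℂ))) := by
    rw [← Set.image_smul, Set.image_image, ← Set.image_smul, Set.image_image]
    apply Set.image_congr
    intro x _
    simp [Units.smul_def, norm_mul, Complex.norm_real, Real.norm_eq_abs, abs_of_pos hr, smul_eq_mul]
  rw [himg, Real.sSup_smul_of_nonneg hr.le, smul_eq_mul]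

lemma sSup_abs_insert0 (S : Set ℂ) (hS : S.Finite) :
    sSup ((fun z : ℂ => ‖z‖) '' S) = sSup (insert 0 ((fun z : ℂ => ‖z‖) '' S)) := by
  rcases S.eq_empty_or_nonempty with rfl | ⟨z, hz⟩
  · simp
  · rw [csSup_insert ((hS.image _).bddAbove) ⟨_, ⟨z, hz, rfl⟩⟩]
    have : (0:ℝ) ≤ sSup ((fun z : ℂ => ‖z‖) '' S) :=
      le_trans (norm_nonneg z) (le_csSup ((hS.image _).bddAbove) ⟨z, hz, rfl⟩)
    exact (sup_eq_right.mpr this).symm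

lemma insert0_abs_eq {S T : Set ℂ} (h : S \ {0} = T \ {0}) :
    insert 0 ((fun z : ℂ => ‖z‖) '' S) = insert 0 ((fun z : ℂ => ‖z‖) '' T) := by
  have key : ∀ S T : Set ℂ, S \ {0} = T \ {0} →
      insert (0:ℝ) ((fun z : ℂ => ‖z‖) '' S) ⊆ insert 0 ((fun z : ℂ => ‖z‖) '' T) := by
    intro S T h x hx
    rcases hx with rfl | ⟨μ, hμ, rfl⟩
    · exact Set.mem_insert _ _
    · by_cases hμ0 : μ = 0
      · subst hμ0; simp
      · have : μ ∈ T \ {0} := h ▸ ⟨hμ, hμ0⟩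
        exact Set.mem_insert_of_mem _ ⟨μ, this.1, rfl⟩
  exact le_antisymm (key S T h) (key T S h.symm)


lemma det_smul_one_sub (μ : ℂ) {m k : ℕ} (A : Matrix (Fin m) (Fin k) ℂ)
    (B : Matrix (Fin k) (Fin m) ℂ) (hμ : μ ≠ 0) :
    (μ • (1 : Matrix (Fin m) (Fin m) ℂ) - A * B).det
      = μ ^ m * ((1 : Matrix (Fin m) (Fin m) ℂ) - μ⁻¹ • (A * B)).det := by
  have h1 : μ • (1 : Matrix (Fin m) (Fin m) ℂ) - A * B
      = μ • ((1 : Matrix (Fin m) (Fin m) ℂ) - μ⁻¹ • (A * B)) := by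
    rw [smul_sub, smul_smul, mul_inv_cancel₀ hμ, one_smul]
  rw [h1, Matrix.det_smul]
  simp

lemma det_one_sub_smul_comm (μ : ℂ) {m k : ℕ} (A : Matrix (Fin m) (Fin k) ℂ)
    (B : Matrix (Fin k) (Fin m) ℂ) :
    ((1 : Matrix (Fin m) (Fin m) ℂ) - μ • (A * B)).det
      = ((1 : Matrix (Fin k) (Fin k) ℂ) - μ • (B * A)).det := by
  have h1 : (1 : Matrix (Fin m) (Fin m) ℂ) - μ • (A * B)
      = 1 + (-(μ • A)) * B := by
    rw [Matrix.neg_mul, Matrix.smul_mul, ← sub_eq_add_neg]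
  have h2 : (1 : Matrix (Fin k) (Fin k) ℂ) - μ • (B * A)
      = 1 + B * (-(μ • A)) := by
    rw [Matrix.mul_neg, Matrix.mul_smul, ← sub_eq_add_neg]
  rw [h1, h2, Matrix.det_one_add_mul_comm]

lemma spec_nonzero_swap {m k : ℕ} (A : Matrix (Fin m) (Fin k) ℂ)
    (B : Matrix (Fin k) (Fin m) ℂ) :
    spectrum ℂ (A * B) \ {0} = spectrum ℂ (B * A) \ {0} := by
  have key : ∀ {m k : ℕ} (A : Matrix (Fin m) (Fin k) ℂ) (B : Matrix (Fin k) (Fin m) ℂ)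
      (μ : ℂ), μ ≠ 0 → μ ∈ spectrum ℂ (A * B) → μ ∈ spectrum ℂ (B * A) := by
    intro m k A B μ hμ h
    rw [spectrum.mem_iff, Algebra.algebraMap_eq_smul_one, Matrix.isUnit_iff_isUnit_det,
      isUnit_iff_ne_zero, ne_eq, not_not] at h ⊢
    rw [det_smul_one_sub μ A B hμ] at h
    rw [det_smul_one_sub μ B A hμ, ← det_one_sub_smul_comm μ⁻¹ A B]
    rcases mul_eq_zero.mp h with h' | h'
    · exact absurd h' (pow_ne_zero _ hμ)
    · rw [h', mul_zero]
  ext μ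
  simp only [Set.mem_diff, Set.mem_singleton_iff]
  exact ⟨fun ⟨h1, h2⟩ => ⟨key A B μ h2 h1, h2⟩, fun ⟨h1, h2⟩ => ⟨key B A μ h2 h1, h2⟩⟩

lemma specRad_mul_comm {m k : ℕ} (A : Matrix (Fin m) (Fin k) ℝ) (B : Matrix (Fin k) (Fin m) ℝ) :
    specRad (A * B) = specRad (B * A) := by
  have hAB : (A * B).map ((↑) : ℝ → ℂ) = A.map ((↑) : ℝ → ℂ) * B.map ((↑) : ℝ → ℂ) := by
    exact Matrix.map_mul (f := Complex.ofRealHom)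
  have hBA : (B * A).map ((↑) : ℝ → ℂ) = B.map ((↑) : ℝ → ℂ) * A.map ((↑) : ℝ → ℂ) := by
    exact Matrix.map_mul (f := Complex.ofRealHom)
  unfold specRad
  rw [hAB, hBA, sSup_abs_insert0 _ (Matrix.finite_spectrum _),
    sSup_abs_insert0 _ (Matrix.finite_spectrum _)]
  exact congrArg sSup (insert0_abs_eq (spec_nonzero_swap (A.map ((↑) : ℝ → ℂ)) (B.map ((↑) : ℝ → ℂ))))
lemma push_inv {m k : ℕ} (U : Matrix (Fin m) (Fin k) ℝ) (V : Matrix (Fin k) (Fin m) ℝ)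
    (h : IsUnit ((1 : Matrix (Fin k) (Fin k) ℝ) - V * U).det) :
    ((1 : Matrix (Fin m) (Fin m) ℝ) - U * V)⁻¹
      = 1 + U * ((1 : Matrix (Fin k) (Fin k) ℝ) - V * U)⁻¹ * V := by
  apply Matrix.inv_eq_right_inv
  set W := ((1 : Matrix (Fin k) (Fin k) ℝ) - V * U)⁻¹ with hW
  have h1 : ((1 : Matrix (Fin k) (Fin k) ℝ) - V * U) * W = 1 := Matrix.mul_nonsing_inv _ h
  rw [Matrix.sub_mul, one_mul] at h1
  have h2 : V * U * W = W - 1 := by rw [eq_sub_iff_add_eq, ← h1]; abel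
  calc ((1 : Matrix (Fin m) (Fin m) ℝ) - U * V) * (1 + U * W * V)
      = 1 + U * W * V - U * V - U * V * (U * W * V) := by
        rw [Matrix.sub_mul, one_mul, Matrix.mul_add, mul_one]; abel
    _ = 1 + U * W * V - U * V - U * ((V * U * W) * V) := by
        simp only [Matrix.mul_assoc]
    _ = 1 + U * W * V - U * V - U * ((W - 1) * V) := by rw [h2]
    _ = 1 := by rw [Matrix.sub_mul, Matrix.mul_sub]; simp only [Matrix.one_mul, Matrix.mul_assoc]; abel

set_option maxRecDepth 4000 in
theorem diag_gramian_expected_dynamics {K n : ℕ} (hn : 0 < n)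
    (Φ : Matrix (Fin K) (Fin n) ℝ)
    (hmem : ∀ v : Fin n, ∃ k : Fin K, (fun k' => Φ k' v) = Pi.single k 1)
    (P : Matrix (Fin K) (Fin K) ℝ) (hP : P.IsSymm)
    (c : ℝ) (hc : 0 < c)
    (D Dhalf Dinvhalf : Matrix (Fin K) (Fin K) ℝ)
    (Abar Anom : Matrix (Fin n) (Fin n) ℝ)
    (Υ : Matrix (Fin K) (Fin K) ℝ) (γ : ℝ)
    (hD : D = (1 / (n : ℝ)) • (Φ * Φᵀ))
    (hDpos : ∀ k, 0 < D k k)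
    (hDhalf : Dhalf = Matrix.diagonal fun k => Real.sqrt (D k k))
    (hDinvhalf : Dinvhalf = Matrix.diagonal fun k => (Real.sqrt (D k k))⁻¹)
    (hAbar : Abar = Φᵀ * P * Φ)
    (hρ : 0 < specRad Abar)
    (hAnom : Anom = (1 / (c + specRad Abar)) • Abar)
    (hγ : γ = 1 / (c / (n : ℝ) + specRad (P * D)))
    (hΥ : Υ = Dinvhalf * ((1 - (γ • (Dhalf * P * Dhalf)) ^ 2)⁻¹ - 1) * Dinvhalf)
    (hlt : specRad (γ • (Dhalf * P * Dhalf)) < 1) :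
    ∀ i : Fin n,
      ((((1 : Matrix (Fin n) (Fin n) ℝ) - Anom ^ 2)⁻¹ : Matrix (Fin n) (Fin n) ℝ)) i i =
        1 + (1 / (n : ℝ)) * (Φᵀ *ᵥ fun k => Υ k k) i := by
  have hn0 : (n : ℝ) ≠ 0 := Nat.cast_ne_zero.mpr hn.ne'
  set M : Matrix (Fin K) (Fin K) ℝ := γ • (Dhalf * P * Dhalf) with hM
  -- Φ columns are indicators
  have hφ : ∀ v k, Φ k v = if k = (hmem v).choose then 1 else 0 := by
    intro v k
    have h := congrFun (hmem v).choose_spec k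
    rw [Pi.single_apply] at h
    exact h
  -- Φ * Φᵀ = n • D
  have hPP : Φ * Φᵀ = (n : ℝ) • D := by
    rw [hD, smul_smul, mul_one_div, div_self hn0, one_smul]
  -- D is diagonal
  have hDdiag : D = Matrix.diagonal (fun k => D k k) := by
    ext k l
    by_cases hkl : k = l
    · subst hkl; rw [Matrix.diagonal_apply_eq]
    · rw [Matrix.diagonal_apply_ne _ hkl, hD]
      simp only [Matrix.smul_apply, Matrix.mul_apply, Matrix.transpose_apply, smul_eq_mul]
      rw [Finset.sum_eq_zero, mul_zero]
      intro v _
      rw [hφ v k, hφ v l]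
      split_ifs with h1 h2 <;> first | exact absurd (h1.trans h2.symm) hkl | norm_num
  have hsqrt0 : ∀ k, Real.sqrt (D k k) ≠ 0 := fun k => (Real.sqrt_pos.mpr (hDpos k)).ne'
  have hHalfInv : Dhalf * Dinvhalf = 1 := by
    rw [hDhalf, hDinvhalf, Matrix.diagonal_mul_diagonal,
      show (fun k => Real.sqrt (D k k) * (Real.sqrt (D k k))⁻¹) = fun _ => (1:ℝ) from
        funext fun k => mul_inv_cancel₀ (hsqrt0 k), Matrix.diagonal_one]
  have hInvHalf : Dinvhalf * Dhalf = 1 := by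
    rw [hDhalf, hDinvhalf, Matrix.diagonal_mul_diagonal,
      show (fun k => (Real.sqrt (D k k))⁻¹ * Real.sqrt (D k k)) = fun _ => (1:ℝ) from
        funext fun k => inv_mul_cancel₀ (hsqrt0 k), Matrix.diagonal_one]
  have hHalfSq : Dhalf * Dhalf = D := by
    rw [hDhalf, Matrix.diagonal_mul_diagonal,
      show (fun k => Real.sqrt (D k k) * Real.sqrt (D k k)) = fun k => D k k from
        funext fun k => Real.mul_self_sqrt (hDpos k).le, ← hDdiag]
  -- assoc helpers
  have hA1 : ∀ X : Matrix (Fin K) (Fin K) ℝ, Dinvhalf * (Dhalf * X) = X := fun X => by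
    rw [← Matrix.mul_assoc, hInvHalf, one_mul]
  have hA2 : ∀ X : Matrix (Fin K) (Fin K) ℝ, Dhalf * (Dinvhalf * X) = X := fun X => by
    rw [← Matrix.mul_assoc, hHalfInv, one_mul]
  have hA3 : ∀ X : Matrix (Fin K) (Fin K) ℝ, Dhalf * (Dhalf * X) = D * X := fun X => by
    rw [← Matrix.mul_assoc, hHalfSq]
  have hPPx : ∀ X : Matrix (Fin K) (Fin n) ℝ, Φ * (Φᵀ * X) = (n:ℝ) • (D * X) := fun X => by
    rw [← Matrix.mul_assoc, hPP]
    exact Matrix.smul_mul _ _ _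
  -- spectral radius relation
  have hρeq : specRad Abar = (n : ℝ) * specRad (P * D) := by
    rw [hAbar, Matrix.mul_assoc, specRad_mul_comm, Matrix.mul_assoc, hPP,
      mul_smul_comm, specRad_smul _ (by exact_mod_cast hn)]
  have hρPD : 0 < specRad (P * D) := by
    by_contra h
    push_neg at h
    nlinarith [hρ, hρeq, (by exact_mod_cast hn : (0:ℝ) < n)]
  have hden : c / (n:ℝ) + specRad (P * D) > 0 := by positivity
  have hcoef : 1 / (c + specRad Abar) = γ / n := by
    rw [hγ, hρeq]
    field_simp
  -- N and its relations
  set N : Matrix (Fin K) (Fin K) ℝ := γ ^ 2 • (P * D * P * D) with hN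
  have hNM : Dinvhalf * M ^ 2 * Dhalf = N := by
    rw [hM, hN, pow_two]
    simp only [smul_mul_assoc, mul_smul_comm, smul_smul, Matrix.mul_assoc, hA1, hA2, hA3,
      hHalfInv, hInvHalf, hHalfSq, mul_one, one_mul]
    rw [sq γ]

  have h1N : (1 : Matrix (Fin K) (Fin K) ℝ) - N = Dinvhalf * (1 - M ^ 2) * Dhalf := by
    rw [Matrix.mul_sub, Matrix.mul_one, Matrix.sub_mul, hInvHalf, hNM]
  have hdetM2 : IsUnit ((1 : Matrix (Fin K) (Fin K) ℝ) - M ^ 2).det :=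
    isUnit_det_one_sub_sq M hlt
  have hdd : Dinvhalf.det * Dhalf.det = 1 := by
    rw [← Matrix.det_mul, hInvHalf, Matrix.det_one]
  have hdetN : IsUnit ((1 : Matrix (Fin K) (Fin K) ℝ) - N).det := by
    rw [h1N, Matrix.det_mul, Matrix.det_mul, isUnit_iff_ne_zero]
    exact mul_ne_zero (mul_ne_zero (left_ne_zero_of_mul_eq_one hdd)
      (isUnit_iff_ne_zero.mp hdetM2)) (right_ne_zero_of_mul_eq_one hdd)
  have hinvM2 : ((1 : Matrix (Fin K) (Fin K) ℝ) - M ^ 2)⁻¹ = Dhalf * (1 - N)⁻¹ * Dinvhalf := by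
    apply Matrix.inv_eq_right_inv
    have hfac : (1 : Matrix (Fin K) (Fin K) ℝ) - M ^ 2 = Dhalf * ((1 - N) * Dinvhalf) := by
      rw [h1N]
      simp only [Matrix.mul_assoc, hA2, hHalfInv, mul_one]
    rw [hfac]
    simp only [Matrix.mul_assoc, hA1]
    rw [← Matrix.mul_assoc (1 - N), Matrix.mul_nonsing_inv _ hdetN, one_mul, hHalfInv]
  have hsub : ((1 : Matrix (Fin K) (Fin K) ℝ) - M ^ 2)⁻¹ - 1 = (1 - M ^ 2)⁻¹ * M ^ 2 := by
    have h := Matrix.nonsing_inv_mul _ hdetM2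
    rw [Matrix.mul_sub, mul_one] at h
    rw [sub_eq_iff_eq_add] at h ⊢
    exact h.trans (add_comm _ _)
  have hMid : Dinvhalf * M ^ 2 * Dinvhalf = γ ^ 2 • (P * D * P) := by
    rw [hM, pow_two]
    simp only [smul_mul_assoc, mul_smul_comm, smul_smul, Matrix.mul_assoc, hA1, hA2, hA3,
      hHalfInv, hInvHalf, hHalfSq, mul_one, one_mul]
    rw [sq γ]
  have hUpsN : Υ = (1 - N)⁻¹ * (γ ^ 2 • (P * D * P)) := by
    rw [hΥ, hsub, hinvM2, ← hMid]
    simp only [Matrix.mul_assoc, hA1]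
  have hmidPP : (Φᵀ * P * Φ) * (Φᵀ * P * Φ) = (n : ℝ) • (Φᵀ * (P * D * P) * Φ) := by
    calc (Φᵀ * P * Φ) * (Φᵀ * P * Φ) = Φᵀ * P * (Φ * Φᵀ) * (P * Φ) := by
          simp only [Matrix.mul_assoc]
      _ = Φᵀ * P * ((n : ℝ) • D) * (P * Φ) := by rw [hPP]
      _ = (n : ℝ) • (Φᵀ * (P * D * P) * Φ) := by
          simp only [Matrix.mul_smul, Matrix.smul_mul]
          congr 1
          simp only [Matrix.mul_assoc]
  have hUV : Anom ^ 2 = Φᵀ * (((γ ^ 2 / (n : ℝ)) • (P * D * P)) * Φ) := by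
    rw [hAnom, hcoef, hAbar, smul_pow, pow_two (Φᵀ * P * Φ), hmidPP, smul_smul, Matrix.smul_mul,
      Matrix.mul_smul, ← Matrix.mul_assoc]
    congr 1
    · rw [div_pow]
      field_simp
    · simp only [Matrix.mul_assoc]
  have hVU : (((γ ^ 2 / (n : ℝ)) • (P * D * P)) * Φ) * Φᵀ = N := by
    rw [hN, Matrix.smul_mul, Matrix.smul_mul, Matrix.mul_assoc, hPP, Matrix.mul_smul, smul_smul]
    congr 1
    field_simp
  have hdetVU : IsUnit ((1 : Matrix (Fin K) (Fin K) ℝ)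
      - (((γ ^ 2 / (n : ℝ)) • (P * D * P)) * Φ) * Φᵀ).det := by
    rw [hVU]; exact hdetN
  have hkey : ((1 : Matrix (Fin n) (Fin n) ℝ) - Anom ^ 2)⁻¹
      = 1 + (1 / (n : ℝ)) • (Φᵀ * Υ * Φ) := by
    rw [hUV, push_inv _ _ hdetVU, hVU, hUpsN]
    congr 1
    simp only [Matrix.smul_mul, Matrix.mul_smul, smul_smul]
    congr 1
    · ring
    · simp only [Matrix.mul_assoc]
  intro i
  rw [hkey]
  obtain ⟨k₀, hk⟩ := hmem i
  have hφi : ∀ k, Φ k i = if k = k₀ then 1 else 0 := by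
    intro k
    have h := congrFun hk k
    rw [Pi.single_apply] at h
    exact h
  simp only [Matrix.add_apply, Matrix.smul_apply, Matrix.one_apply_eq, smul_eq_mul]
  congr 1
  have hL : (Φᵀ * Υ * Φ) i i = Υ k₀ k₀ := by
    simp only [Matrix.mul_apply, Matrix.transpose_apply, hφi, ite_mul, mul_ite, one_mul, zero_mul,
      mul_one, mul_zero, Finset.sum_ite_eq', Finset.mem_univ, if_true]
  have hR : (Φᵀ *ᵥ fun k => Υ k k) i = Υ k₀ k₀ := by
    show ((fun j => Φᵀ i j) ⬝ᵥ fun k => Υ k k) = _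
    simp only [dotProduct, Matrix.transpose_apply, hφi, ite_mul, one_mul, zero_mul,
      Finset.sum_ite_eq', Finset.mem_univ, if_true]
  rw [hL, hR]
end
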